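/- Let f(x) = ∑_{i≥1} a_i x^i with a₁ ≠ 1 over a field, and f^(n) its n-fold composition. Then the coefficient of x² in f^(n) equals a₂(a₁^{2n} − a₁^n)/(a₁² − a₁). -/

import Mathlib

open PowerSeries Finset

/-- Composition of formal power series (meaningful when `g` has zero constant term):
the coefficient of `x^k` in `f(g(x))` is `∑_{j=0}^{k} f_j · [x^k](g^j)`. -/
noncomputable def pscomp {R : Type*} [CommRing R] (f g : PowerSeries R) : PowerSeries R :=
  PowerSeries.mk fun k =>
    ∑ j ∈ Finset.range (k + 1), (PowerSeries.coeff j f) * (PowerSeries.coeff k (g ^ j))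

/-- The `n`-fold composition `f^(n)`: `f^(1) = f`, `f^(n) = f^(n-1) ∘ f`. -/
noncomputable def psiter {R : Type*} [CommRing R] (f : PowerSeries R) : ℕ → PowerSeries R
  | 0 => PowerSeries.X
  | 1 => f
  | (n + 2) => pscomp (psiter f (n + 1)) f

/-! Since `f` has no constant term, only the `x` and `x²` terms of the outer series contribute
to the `x²` coefficient of a composition with `f`. Hence `[x] f^(n) = a₁ⁿ` and
`[x²] f^(n+1) = a₁ⁿ a₂ + a₁² [x²] f^(n)`, a linear recurrence whose solution is the closed
form, here multiplied through by `a₁² − a₁` so that it makes sense over any commutative ring. -/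

section

variable {R : Type*} [CommRing R]

@[simp]
theorem coeff_pscomp (F g : R⟦X⟧) (k : ℕ) :
    coeff k (pscomp F g) = ∑ j ∈ range (k + 1), coeff j F * coeff k (g ^ j) := by
  simp [pscomp]

theorem coeff_two_sq_of_constantCoeff_eq_zero {g : R⟦X⟧} (hg : constantCoeff g = 0) :
    coeff 2 (g ^ 2) = coeff 1 g ^ 2 := by
  simp [sq, coeff_mul, Nat.antidiagonal_succ, hg]

theorem pscomp_X {g : R⟦X⟧} (hg : constantCoeff g = 0) : pscomp X g = g := by
  ext (_ | k)
  · simp [hg]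
  · simp [coeff_X]

theorem coeff_one_pscomp (F g : R⟦X⟧) :
    coeff 1 (pscomp F g) = coeff 1 F * coeff 1 g := by
  simp [sum_range_succ]

theorem coeff_two_pscomp (F : R⟦X⟧) {g : R⟦X⟧} (hg : constantCoeff g = 0) :
    coeff 2 (pscomp F g) = coeff 1 F * coeff 2 g + coeff 2 F * coeff 1 g ^ 2 := by
  simp [sum_range_succ, coeff_two_sq_of_constantCoeff_eq_zero hg]

variable {f : R⟦X⟧}

theorem psiter_succ (hf : constantCoeff f = 0) (n : ℕ) :
    psiter f (n + 1) = pscomp (psiter f n) f := by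
  cases n with
  | zero => exact (pscomp_X hf).symm
  | succ n => rfl

theorem coeff_one_psiter (hf : constantCoeff f = 0) (n : ℕ) :
    coeff 1 (psiter f n) = coeff 1 f ^ n := by
  induction n with
  | zero => simp [psiter]
  | succ n ih => rw [psiter_succ hf, coeff_one_pscomp, ih, pow_succ]

theorem coeff_two_psiter_succ (hf : constantCoeff f = 0) (n : ℕ) :
    coeff 2 (psiter f (n + 1)) =
      coeff 1 f ^ n * coeff 2 f + coeff 1 f ^ 2 * coeff 2 (psiter f n) := by
  rw [psiter_succ hf, coeff_two_pscomp _ hf, coeff_one_psiter hf]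
  ring

theorem coeff_two_psiter_mul (hf : constantCoeff f = 0) (n : ℕ) :
    coeff 2 (psiter f n) * (coeff 1 f ^ 2 - coeff 1 f) =
      coeff 2 f * (coeff 1 f ^ (2 * n) - coeff 1 f ^ n) := by
  induction n with
  | zero => simp [psiter, coeff_X]
  | succ n ih =>
    rw [coeff_two_psiter_succ hf]
    linear_combination coeff 1 f ^ 2 * ih

end

theorem muckenhoupt_general {K : Type*} [Field K] (a : ℕ → K) (h0 : a 0 = 0)
    (ha0 : a 1 ≠ 0) (ha1 : a 1 ≠ 1) (n : ℕ) :
    PowerSeries.coeff 2 (psiter (PowerSeries.mk a) n) =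
      a 2 * (a 1 ^ (2 * n) - a 1 ^ n) / (a 1 ^ 2 - a 1) := by
  have hden : a 1 ^ 2 - a 1 ≠ 0 := by
    rw [sq, ← mul_sub_one]
    exact mul_ne_zero ha0 (sub_ne_zero.mpr ha1)
  rw [eq_div_iff hden]
  simpa using coeff_two_psiter_mul (f := mk a) (by simpa using h0) n

/-- Muckenhoupt's Lemma: if `a₁ ∉ {0, 1}`, the coefficient of `x²` in `f^(n)`
equals `a₂(a₁^{2n} − a₁^n)/(a₁² − a₁)`. -/
theorem muckenhoupt {K : Type*} [Field K] (a : ℕ → K) (h0 : a 0 = 0)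
    (ha0 : a 1 ≠ 0) (ha1 : a 1 ≠ 1) (n : ℕ) (hn : 1 ≤ n) :
    PowerSeries.coeff 2 (psiter (PowerSeries.mk a) n) =
      a 2 * (a 1 ^ (2 * n) - a 1 ^ n) / (a 1 ^ 2 - a 1) :=
  muckenhoupt_general a h0 ha0 ha1 n
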